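/- arXiv:1212.6867 — 5 statements merged into one kernel-verified Lean document; each statement's English description precedes it below -/
import Mathlib

section
/- For fixed real constants a > b > 0, define for each real λ with λ ≠ a and λ ≠ b the function K_λ(x, y, ẋ, ẏ) = ẋ²/(a−λ) + ẏ²/(b−λ) − (ẋy − ẏx)²/((a−λ)(b−λ)) on R⁴. Then for any two admissible parameters λ₁, λ₂, the canonical Poisson bracket {K_{λ₁}, K_{λ₂}} = (∂K_{λ₁}/∂x)(∂K_{λ₂}/∂ẋ) − (∂K_{λ₁}/∂ẋ)(∂K_{λ₂}/∂x) + (∂K_{λ₁}/∂y)(∂K_{λ₂}/∂ẏ) − (∂K_{λ₁}/∂ẏ)(∂K_{λ₂}/∂y) vanishes identically. -/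
/-!
Write `K_λ = Q (a - λ) (b - λ)` with `Q c d = ẋ²/c + ẏ²/d - L²/(c d)`, where `L = ẋ y - ẏ x`.
Every partial derivative of `Q` is linear in the momenta and in `L`; in the bracket the `L²`
terms cancel in pairs, and what is left is `4 ẋ ẏ L ((c₁ - d₁) - (c₂ - d₂)) / (c₁ d₁ c₂ d₂)`.
For the confocal family `c - d = a - b` does not depend on `λ`, so this vanishes.
-/

noncomputable def confocalConic (c d x y vx vy : ℝ) : ℝ :=
  vx ^ 2 / c + vy ^ 2 / d - (vx * y - vy * x) ^ 2 / (c * d)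

section Derivatives

variable (c d x y vx vy : ℝ)

lemma deriv_confocalConic_x :
    deriv (fun x' => confocalConic c d x' y vx vy) x
      = 2 * vy * (vx * y - vy * x) / (c * d) := by
  have h : HasDerivAt (fun x' => confocalConic c d x' y vx vy) _ x :=
    ((((hasDerivAt_id' x).const_mul vy).const_sub (vx * y)).fun_pow 2).div_const (c * d)
      |>.const_sub (vx ^ 2 / c + vy ^ 2 / d)
  rw [h.deriv]; ring

lemma deriv_confocalConic_vx :
    deriv (fun vx' => confocalConic c d x y vx' vy) vx
      = 2 * vx / c - 2 * y * (vx * y - vy * x) / (c * d) := by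
  have h : HasDerivAt (fun vx' => confocalConic c d x y vx' vy) _ vx :=
    ((((hasDerivAt_id' vx).fun_pow 2).div_const c).add_const (vy ^ 2 / d)).sub
      ((((hasDerivAt_id' vx).mul_const y).sub_const (vy * x)).fun_pow 2 |>.div_const (c * d))
  rw [h.deriv]; ring

lemma deriv_confocalConic_y :
    deriv (fun y' => confocalConic c d x y' vx vy) y
      = -(2 * vx * (vx * y - vy * x)) / (c * d) := by
  have h : HasDerivAt (fun y' => confocalConic c d x y' vx vy) _ y :=
    ((((hasDerivAt_id' y).const_mul vx).sub_const (vy * x)).fun_pow 2).div_const (c * d)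
      |>.const_sub (vx ^ 2 / c + vy ^ 2 / d)
  rw [h.deriv]; ring

lemma deriv_confocalConic_vy :
    deriv (fun vy' => confocalConic c d x y vx vy') vy
      = 2 * vy / d + 2 * x * (vx * y - vy * x) / (c * d) := by
  have h : HasDerivAt (fun vy' => confocalConic c d x y vx vy') _ vy :=
    ((((hasDerivAt_id' vy).fun_pow 2).div_const d).const_add (vx ^ 2 / c)).sub
      ((((hasDerivAt_id' vy).mul_const x).const_sub (vx * y)).fun_pow 2 |>.div_const (c * d))
  rw [h.deriv]; ring

end Derivatives

lemma confocalConic_bracket_eq_zero {c₁ d₁ c₂ d₂ : ℝ} (hc₁ : c₁ ≠ 0) (hd₁ : d₁ ≠ 0)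
    (hc₂ : c₂ ≠ 0) (hd₂ : d₂ ≠ 0) (h : c₁ - d₁ = c₂ - d₂) (x y vx vy : ℝ) :
    (2 * vy * (vx * y - vy * x) / (c₁ * d₁))
        * (2 * vx / c₂ - 2 * y * (vx * y - vy * x) / (c₂ * d₂))
      - (2 * vx / c₁ - 2 * y * (vx * y - vy * x) / (c₁ * d₁))
        * (2 * vy * (vx * y - vy * x) / (c₂ * d₂))
      + (-(2 * vx * (vx * y - vy * x)) / (c₁ * d₁))
        * (2 * vy / d₂ + 2 * x * (vx * y - vy * x) / (c₂ * d₂))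
      - (2 * vy / d₁ + 2 * x * (vx * y - vy * x) / (c₁ * d₁))
        * (-(2 * vx * (vx * y - vy * x)) / (c₂ * d₂))
      = 0 := by
  obtain rfl : c₁ = c₂ - d₂ + d₁ := by linarith
  field_simp
  ring

theorem poisson_bracket_K_vanishes_general (a b : ℝ)
    (l₁ l₂ : ℝ) (h₁a : l₁ ≠ a) (h₁b : l₁ ≠ b) (h₂a : l₂ ≠ a) (h₂b : l₂ ≠ b)
    (K : ℝ → ℝ → ℝ → ℝ → ℝ → ℝ)
    (hK : ∀ l x y vx vy, K l x y vx vy =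
      vx ^ 2 / (a - l) + vy ^ 2 / (b - l)
        - (vx * y - vy * x) ^ 2 / ((a - l) * (b - l))) :
    ∀ x y vx vy : ℝ,
      (deriv (fun x' => K l₁ x' y vx vy) x) * (deriv (fun vx' => K l₂ x y vx' vy) vx)
      - (deriv (fun vx' => K l₁ x y vx' vy) vx) * (deriv (fun x' => K l₂ x' y vx vy) x)
      + (deriv (fun y' => K l₁ x y' vx vy) y) * (deriv (fun vy' => K l₂ x y vx vy') vy)
      - (deriv (fun vy' => K l₁ x y vx vy') vy) * (deriv (fun y' => K l₂ x y' vx vy) y)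
      = 0 := by
  obtain rfl : K = fun l => confocalConic (a - l) (b - l) := by
    funext l x y vx vy
    exact hK l x y vx vy
  intro x y vx vy
  simp only [deriv_confocalConic_x, deriv_confocalConic_vx, deriv_confocalConic_y,
    deriv_confocalConic_vy]
  exact confocalConic_bracket_eq_zero (sub_ne_zero.mpr h₁a.symm) (sub_ne_zero.mpr h₁b.symm)
    (sub_ne_zero.mpr h₂a.symm) (sub_ne_zero.mpr h₂b.symm) (by ring) x y vx vy

/-- The functions `K_λ` are in involution with respect to the canonical
Poisson bracket on `ℝ⁴` with conjugate pairs `(x, ẋ)` and `(y, ẏ)`. -/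
theorem poisson_bracket_K_vanishes (a b : ℝ) (hab : a > b) (hb : b > 0)
    (l₁ l₂ : ℝ) (h₁a : l₁ ≠ a) (h₁b : l₁ ≠ b) (h₂a : l₂ ≠ a) (h₂b : l₂ ≠ b)
    (K : ℝ → ℝ → ℝ → ℝ → ℝ → ℝ)
    (hK : ∀ l x y vx vy, K l x y vx vy =
      vx ^ 2 / (a - l) + vy ^ 2 / (b - l)
        - (vx * y - vy * x) ^ 2 / ((a - l) * (b - l))) :
    ∀ x y vx vy : ℝ,
      (deriv (fun x' => K l₁ x' y vx vy) x) * (deriv (fun vx' => K l₂ x y vx' vy) vx)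
      - (deriv (fun vx' => K l₁ x y vx' vy) vx) * (deriv (fun x' => K l₂ x' y vx vy) x)
      + (deriv (fun y' => K l₁ x y' vx vy) y) * (deriv (fun vy' => K l₂ x y vx vy') vy)
      - (deriv (fun vy' => K l₁ x y vx vy') vy) * (deriv (fun y' => K l₂ x y' vx vy) y)
      = 0 :=
  poisson_bracket_K_vanishes_general a b l₁ l₂ h₁a h₁b h₂a h₂b K hK
end

section
/- Let a, b > 0 and let (x₀, y₀) be a point with x₀ ≠ 0, y₀ ≠ 0 lying strictly inside the ellipse x²/a + y²/b = 1 (i.e. x₀²/a + y₀²/b < 1). Then the equation x₀²/(a−λ) + y₀²/(b+λ) = 1 has exactly one solution λ₁ in the interval (−b, 0) and exactly one solution λ₂ in the interval (0, a), and these are the only solutions in (−b, a). -/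
/-- Through every point with nonzero coordinates strictly inside the ellipse
`x²/a + y²/b = 1` in the Minkowski plane there pass exactly two conics of the
confocal family `C_λ : x²/(a−λ) + y²/(b+λ) = 1` with `λ ∈ (−b, a)`: one with
`λ ∈ (−b, 0)` and one with `λ ∈ (0, a)`. -/
theorem minkowski_jacobi_coordinates (a b : ℝ) (ha : 0 < a) (hb : 0 < b)
    (x₀ y₀ : ℝ) (hx : x₀ ≠ 0) (hy : y₀ ≠ 0)
    (hin : x₀ ^ 2 / a + y₀ ^ 2 / b < 1) :
    ∃ l₁ l₂ : ℝ,
      l₁ ∈ Set.Ioo (-b) 0 ∧ l₂ ∈ Set.Ioo 0 a ∧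
      x₀ ^ 2 / (a - l₁) + y₀ ^ 2 / (b + l₁) = 1 ∧
      x₀ ^ 2 / (a - l₂) + y₀ ^ 2 / (b + l₂) = 1 ∧
      ∀ l ∈ Set.Ioo (-b) a,
        x₀ ^ 2 / (a - l) + y₀ ^ 2 / (b + l) = 1 → l = l₁ ∨ l = l₂ := by
  have hx2 : 0 < x₀ ^ 2 := by positivity
  have hy2 : 0 < y₀ ^ 2 := by positivity
  set f : ℝ → ℝ := fun l => (a - l) * (b + l) - x₀ ^ 2 * (b + l) - y₀ ^ 2 * (a - l)
    with hf
  have hcont : Continuous f := by fun_prop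
  have hineq : x₀ ^ 2 * b + y₀ ^ 2 * a < a * b := by
    rw [div_add_div _ _ ha.ne' hb.ne', div_lt_one (by positivity)] at hin
    nlinarith
  have hfb : f (-b) < 0 := by simp only [hf]; nlinarith
  have hf0 : 0 < f 0 := by simp only [hf]; nlinarith
  have hfa : f a < 0 := by simp only [hf]; nlinarith
  -- root in (-b, 0)
  obtain ⟨l₁, hl₁m, hl₁⟩ : ∃ l₁ ∈ Set.Ioo (-b) (0:ℝ), f l₁ = 0 := by
    have := intermediate_value_Ioo (by linarith : (-b:ℝ) ≤ 0) hcont.continuousOn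
    obtain ⟨l₁, hm, he⟩ := this ⟨hfb, hf0⟩
    exact ⟨l₁, hm, he⟩
  obtain ⟨l₂, hl₂m, hl₂⟩ : ∃ l₂ ∈ Set.Ioo (0:ℝ) a, f l₂ = 0 := by
    have := intermediate_value_Ioo' (le_of_lt ha) hcont.continuousOn
    obtain ⟨l₂, hm, he⟩ := this ⟨hfa, hf0⟩
    exact ⟨l₂, hm, he⟩
  have heq : ∀ l ∈ Set.Ioo (-b) a,
      (x₀ ^ 2 / (a - l) + y₀ ^ 2 / (b + l) = 1 ↔ f l = 0) := by
    intro l hl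
    have h1 : 0 < a - l := by linarith [hl.2]
    have h2 : 0 < b + l := by linarith [hl.1]
    rw [hf]
    rw [div_add_div _ _ (ne_of_gt h1) (ne_of_gt h2), div_eq_one_iff_eq (by positivity)]
    show _ ↔ (a - l) * (b + l) - x₀ ^ 2 * (b + l) - y₀ ^ 2 * (a - l) = 0
    constructor <;> intro h <;> linarith [h]
  refine ⟨l₁, l₂, hl₁m, hl₂m, ?_, ?_, ?_⟩
  · exact (heq l₁ ⟨hl₁m.1, by linarith [hl₁m.2]⟩).2 hl₁
  · exact (heq l₂ ⟨by linarith [hl₂m.1], hl₂m.2⟩).2 hl₂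
  · intro l hl hsol
    have hfl : f l = 0 := (heq l hl).1 hsol
    by_contra hne
    push_neg at hne
    obtain ⟨hne1, hne2⟩ := hne
    have e1 : (l - l₁) * ((a - b - x₀ ^ 2 + y₀ ^ 2) - l - l₁) = 0 := by
      have := hl₁
      simp only [hf] at hfl this
      linear_combination hfl - this
    have e2 : (l - l₂) * ((a - b - x₀ ^ 2 + y₀ ^ 2) - l - l₂) = 0 := by
      have := hl₂
      simp only [hf] at hfl this
      linear_combination hfl - this
    have c1 : (a - b - x₀ ^ 2 + y₀ ^ 2) - l - l₁ = 0 :=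
      (mul_eq_zero.1 e1).resolve_left (sub_ne_zero.2 hne1)
    have c2 : (a - b - x₀ ^ 2 + y₀ ^ 2) - l - l₂ = 0 :=
      (mul_eq_zero.1 e2).resolve_left (sub_ne_zero.2 hne2)
    have : l₁ = l₂ := by linarith
    linarith [hl₁m.2, hl₂m.1]
end

section
/- Let a, b > 0. Set α₁ = (ab/(a+b)²)·(a − b − 2√(a² + ab + b²)) and α₂ = (ab/(a+b)²)·(a − b + 2√(a² + ab + b²)). Then α₁ and α₂ are exactly the two roots of the quadratic equation 3a²b² + 2a²bα − 2ab²α − a²α² − 2abα² − b²α² = 0, and they satisfy −b < α₁ < 0 < α₂ < a (so both corresponding confocal conics C_{α₁}, C_{α₂} are ellipses of the Minkowski-plane confocal family). -/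
/-!
Up to sign the quadratic is `(a + b)² α² - 2ab(a - b) α - 3a²b²`, whose discriminant is
`16a²b²(a² + ab + b²)`; this gives the two roots. Clearing the positive denominator `(a + b)²`,
the bound `-b < α₁` becomes `2a√(a² + ab + b²) < 2a² + ab + b²`, true because the squares of the
two sides differ by `b²(a + b)²`. Exchanging `a` and `b` turns `α₂` into `-α₁`, so the bounds on
`α₂` are those on `α₁` with the roles of `a` and `b` swapped.
-/

open Real

noncomputable def caustic₁ (a b : ℝ) : ℝ :=
  a * b / (a + b) ^ 2 * (a - b - 2 * √(a ^ 2 + a * b + b ^ 2))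

noncomputable def caustic₂ (a b : ℝ) : ℝ :=
  a * b / (a + b) ^ 2 * (a - b + 2 * √(a ^ 2 + a * b + b ^ 2))

section

variable (a b : ℝ)

lemma sq_add_mul_add_sq_nonneg : 0 ≤ a ^ 2 + a * b + b ^ 2 := by
  nlinarith [sq_nonneg (a + b)]

lemma sq_sqrt_sq_add_mul_add_sq : √(a ^ 2 + a * b + b ^ 2) ^ 2 = a ^ 2 + a * b + b ^ 2 :=
  sq_sqrt (sq_add_mul_add_sq_nonneg a b)

lemma caustic₂_eq_neg_caustic₁_swap : caustic₂ a b = -caustic₁ b a := by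
  rw [caustic₁, caustic₂, show b ^ 2 + b * a + a ^ 2 = a ^ 2 + a * b + b ^ 2 by ring]
  ring

lemma caustic_quadratic_eq_neg_mul (hab : a + b ≠ 0) (α : ℝ) :
    3 * a ^ 2 * b ^ 2 + 2 * a ^ 2 * b * α - 2 * a * b ^ 2 * α
        - a ^ 2 * α ^ 2 - 2 * a * b * α ^ 2 - b ^ 2 * α ^ 2
      = -(a + b) ^ 2 * ((α - caustic₁ a b) * (α - caustic₂ a b)) := by
  have hs := sq_sqrt_sq_add_mul_add_sq a b
  rw [caustic₁, caustic₂]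
  generalize √(a ^ 2 + a * b + b ^ 2) = s at hs ⊢
  field_simp
  linear_combination (-4 * a ^ 2 * b ^ 2) * hs

lemma caustic_quadratic_eq_zero_iff (hab : a + b ≠ 0) (α : ℝ) :
    3 * a ^ 2 * b ^ 2 + 2 * a ^ 2 * b * α - 2 * a * b ^ 2 * α
        - a ^ 2 * α ^ 2 - 2 * a * b * α ^ 2 - b ^ 2 * α ^ 2 = 0
      ↔ α = caustic₁ a b ∨ α = caustic₂ a b := by
  simp [caustic_quadratic_eq_neg_mul a b hab, hab, sub_eq_zero]

lemma abs_sub_lt_two_mul_sqrt (hab : a + b ≠ 0) : |a - b| < 2 * √(a ^ 2 + a * b + b ^ 2) := by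
  refine abs_lt_of_sq_lt_sq ?_ (by positivity)
  have : 0 < (a + b) ^ 2 := by positivity
  nlinarith [sq_sqrt_sq_add_mul_add_sq a b]

lemma two_mul_mul_sqrt_lt (hb : b ≠ 0) (hab : a + b ≠ 0) :
    2 * a * √(a ^ 2 + a * b + b ^ 2) < 2 * a ^ 2 + a * b + b ^ 2 := by
  refine lt_of_pow_lt_pow_left₀ 2 (by nlinarith [sq_add_mul_add_sq_nonneg a b]) ?_
  have : 0 < (b * (a + b)) ^ 2 := by positivity
  nlinarith [sq_sqrt_sq_add_mul_add_sq a b]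

lemma caustic₁_neg (ha : 0 < a) (hb : 0 < b) : caustic₁ a b < 0 := by
  refine mul_neg_of_pos_of_neg (by positivity) ?_
  linarith [le_abs_self (a - b), abs_sub_lt_two_mul_sqrt a b (by positivity)]

lemma neg_lt_caustic₁ (hb : 0 < b) (hab : a + b ≠ 0) : -b < caustic₁ a b := by
  have hsum : caustic₁ a b + b
      = b * (2 * a ^ 2 + a * b + b ^ 2 - 2 * a * √(a ^ 2 + a * b + b ^ 2)) / (a + b) ^ 2 := by
    rw [caustic₁]
    field_simp
    ring
  have : 0 < caustic₁ a b + b := by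
    rw [hsum]
    exact div_pos (mul_pos hb (sub_pos.2 (two_mul_mul_sqrt_lt a b hb.ne' hab))) (by positivity)
  linarith

end

/-- Caustics of `3`-periodic billiard trajectories in the Minkowski plane:
the two numbers `α₁, α₂` are exactly the roots of the stated quadratic, and
both lie in `(−b, a)`, so both caustics are ellipses of the confocal family. -/
theorem three_periodic_caustics (a b : ℝ) (ha : 0 < a) (hb : 0 < b)
    (α₁ α₂ : ℝ)
    (h₁ : α₁ = a * b / (a + b) ^ 2 * (a - b - 2 * Real.sqrt (a ^ 2 + a * b + b ^ 2)))
    (h₂ : α₂ = a * b / (a + b) ^ 2 * (a - b + 2 * Real.sqrt (a ^ 2 + a * b + b ^ 2))) :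
    (∀ α : ℝ,
      3 * a ^ 2 * b ^ 2 + 2 * a ^ 2 * b * α - 2 * a * b ^ 2 * α
        - a ^ 2 * α ^ 2 - 2 * a * b * α ^ 2 - b ^ 2 * α ^ 2 = 0
      ↔ α = α₁ ∨ α = α₂) ∧
    -b < α₁ ∧ α₁ < 0 ∧ 0 < α₂ ∧ α₂ < a := by
  obtain rfl : α₁ = caustic₁ a b := h₁
  obtain rfl : α₂ = caustic₂ a b := h₂
  have hab : a + b ≠ 0 := by positivity
  refine ⟨caustic_quadratic_eq_zero_iff a b hab, neg_lt_caustic₁ a b hb hab, caustic₁_neg a b ha hb,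
    ?_, ?_⟩ <;> rw [caustic₂_eq_neg_caustic₁_swap]
  · linarith [caustic₁_neg b a hb ha]
  · linarith [neg_lt_caustic₁ b a ha (by positivity)]
end

section
/- Let a > b > 0. The three numbers α₁ = ab/(b−a), α₂ = ab/(a+b), α₃ = −ab/(a+b) are exactly the roots of the cubic equation (−ab − aα + bα)(−ab + aα + bα)(ab + aα + bα) = 0, and moreover α₂ ∈ (−b, a), α₃ ∈ (−b, a), while α₁ ∉ (−b, a). Consequently the caustics of 4-periodic billiard trajectories in the ellipse x²/a + y²/b = 1 in the Minkowski plane are two ellipses and one hyperbola of the confocal family. -/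
/-- Caustics of `4`-periodic billiard trajectories in the Minkowski plane:
`α₁ = ab/(b−a)`, `α₂ = ab/(a+b)`, `α₃ = −ab/(a+b)` are exactly the roots of
the cubic Cayley condition, with `α₂, α₃ ∈ (−b, a)` (ellipses) and
`α₁ ∉ (−b, a)` (a hyperbola). -/
theorem four_periodic_caustics (a b : ℝ) (hab : a > b) (hb : 0 < b)
    (α₁ α₂ α₃ : ℝ)
    (h₁ : α₁ = a * b / (b - a)) (h₂ : α₂ = a * b / (a + b))
    (h₃ : α₃ = -(a * b) / (a + b)) :
    (∀ α : ℝ,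
      (-(a * b) - a * α + b * α) * (-(a * b) + a * α + b * α) * (a * b + a * α + b * α) = 0
      ↔ α = α₁ ∨ α = α₂ ∨ α = α₃) ∧
    α₂ ∈ Set.Ioo (-b) a ∧ α₃ ∈ Set.Ioo (-b) a ∧ α₁ ∉ Set.Ioo (-b) a := by
  have ha : 0 < a := lt_trans hb hab
  have hba : b - a < 0 := by linarith
  have hba' : b - a ≠ 0 := ne_of_lt hba
  have hpb : 0 < a + b := by linarith
  have hpb' : a + b ≠ 0 := ne_of_gt hpb
  subst h₁ h₂ h₃
  refine ⟨fun α => ?_, ?_, ?_, ?_⟩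
  · constructor
    · intro h
      rcases mul_eq_zero.mp h with h' | h'
      · rcases mul_eq_zero.mp h' with h'' | h''
        · left; field_simp; linarith
        · right; left; field_simp; linarith
      · right; right; field_simp; linarith
    · rintro (rfl | rfl | rfl) <;> field_simp <;> ring
  · constructor
    · have : 0 < a * b / (a + b) := div_pos (mul_pos ha hb) hpb
      linarith
    · rw [div_lt_iff₀ hpb]; nlinarith
  · constructor
    · have : a * b / (a + b) < b := by rw [div_lt_iff₀ hpb]; nlinarith
      rw [neg_div]; linarith
    · have : 0 < a * b / (a + b) := div_pos (mul_pos ha hb) hpb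
      rw [neg_div]; linarith
  · intro hmem
    have : a * b / (b - a) < -b := by
      rw [div_lt_iff_of_neg hba]; nlinarith
    exact absurd hmem.1 (by linarith)
end

section
/- The polynomial p(α) = 64α⁶ − 16α⁴ − 52α² + 5 has exactly four real roots, and all of them lie in the open interval (−1, 1); the remaining two roots are a pair of complex-conjugate non-real numbers. -/
lemma cubic_roots : ∃ a b c : ℝ, a < b ∧ b < c ∧ -1 < a ∧ a < 0 ∧ 0 < b ∧ b < 1 ∧ 0 < c ∧ c < 1 ∧
    64 * a ^ 3 - 16 * a ^ 2 - 52 * a + 5 = 0 ∧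
    (∀ x : ℝ, 64 * x ^ 6 - 16 * x ^ 4 - 52 * x ^ 2 + 5
      = 64 * (x ^ 2 - a) * (x ^ 2 - b) * (x ^ 2 - c)) := by
  have hq : Continuous fun t : ℝ => 64 * t ^ 3 - 16 * t ^ 2 - 52 * t + 5 := by continuity
  obtain ⟨a, haI, ha⟩ : ∃ t ∈ Set.Ioo (-1 : ℝ) 0, 64 * t ^ 3 - 16 * t ^ 2 - 52 * t + 5 = 0 := by
    have h := intermediate_value_Ioo (by norm_num : (-1:ℝ) ≤ 0) hq.continuousOn
    have h0 : (0:ℝ) ∈ Set.Ioo (64 * (-1:ℝ) ^ 3 - 16 * (-1)^2 - 52 * (-1) + 5)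
        (64 * (0:ℝ) ^ 3 - 16 * 0^2 - 52 * 0 + 5) := by norm_num
    obtain ⟨t, ht, ht0⟩ := h h0
    exact ⟨t, ht, ht0⟩
  obtain ⟨b, hbI, hb⟩ : ∃ t ∈ Set.Ioo (0 : ℝ) (1/10), 64 * t ^ 3 - 16 * t ^ 2 - 52 * t + 5 = 0 := by
    have h := intermediate_value_Ioo' (by norm_num : (0:ℝ) ≤ 1/10) hq.continuousOn
    have h0 : (0:ℝ) ∈ Set.Ioo (64 * (1/10:ℝ) ^ 3 - 16 * (1/10)^2 - 52 * (1/10) + 5)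
        (64 * (0:ℝ) ^ 3 - 16 * 0^2 - 52 * 0 + 5) := by norm_num
    obtain ⟨t, ht, ht0⟩ := h h0
    exact ⟨t, ht, ht0⟩
  obtain ⟨c, hcI, hc⟩ : ∃ t ∈ Set.Ioo (9/10 : ℝ) 1, 64 * t ^ 3 - 16 * t ^ 2 - 52 * t + 5 = 0 := by
    have h := intermediate_value_Ioo (by norm_num : (9/10:ℝ) ≤ 1) hq.continuousOn
    have h0 : (0:ℝ) ∈ Set.Ioo (64 * (9/10:ℝ) ^ 3 - 16 * (9/10)^2 - 52 * (9/10) + 5)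
        (64 * (1:ℝ) ^ 3 - 16 * 1^2 - 52 * 1 + 5) := by norm_num
    obtain ⟨t, ht, ht0⟩ := h h0
    exact ⟨t, ht, ht0⟩
  obtain ⟨ha1, ha0⟩ := haI
  obtain ⟨hb0, hb1⟩ := hbI
  obtain ⟨hc0, hc1⟩ := hcI
  have hab : a < b := lt_trans ha0 hb0
  have hbc : b < c := lt_trans hb1 (by linarith)
  have hac : a < c := lt_trans hab hbc
  -- Vieta: coefficients
  set A : ℝ := 64 * (a + b + c) - 16 with hA'
  set B : ℝ := -64 * (a*b + a*c + b*c) - 52 with hB'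
  set C : ℝ := 64 * (a*b*c) + 5 with hC'
  have h1 : A * a ^ 2 + B * a + C = 0 := by rw [hA', hB', hC']; linear_combination ha
  have h2 : A * b ^ 2 + B * b + C = 0 := by rw [hA', hB', hC']; linear_combination hb
  have h3 : A * c ^ 2 + B * c + C = 0 := by rw [hA', hB', hC']; linear_combination hc
  have h12 : A * (a + b) + B = 0 := by
    have := sub_eq_zero.mpr (h1.trans h2.symm)
    have h : (a - b) * (A * (a + b) + B) = 0 := by linear_combination this
    rcases mul_eq_zero.mp h with h | h
    · exact absurd h (by intro h'; linarith [sub_eq_zero.mp h'])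
    · exact h
  have h13 : A * (a + c) + B = 0 := by
    have := sub_eq_zero.mpr (h1.trans h3.symm)
    have h : (a - c) * (A * (a + c) + B) = 0 := by linear_combination this
    rcases mul_eq_zero.mp h with h | h
    · exact absurd h (by intro h'; linarith [sub_eq_zero.mp h'])
    · exact h
  have hA : A = 0 := by
    have h : A * (b - c) = 0 := by linear_combination h12 - h13
    rcases mul_eq_zero.mp h with h | h
    · exact h
    · exact absurd h (by intro h'; linarith [sub_eq_zero.mp h'])
  have hB : B = 0 := by linear_combination h12 - (a + b) * hA
  have hC : C = 0 := by linear_combination h1 - a^2 * hA - a * hB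
  refine ⟨a, b, c, hab, hbc, ha1, ha0, hb0, by linarith, by linarith, hc1, ha, fun x => ?_⟩
  have hAA : 64 * (a + b + c) - 16 = 0 := hA
  have hBB : -64 * (a*b + a*c + b*c) - 52 = 0 := hB
  have hCC : 64 * (a*b*c) + 5 = 0 := hC
  linear_combination x^4 * hAA + x^2 * hBB + hCC
open Complex in
/-- The polynomial `64α⁶ − 16α⁴ − 52α² + 5` has exactly four real roots, all
in `(−1, 1)`, and a pair of complex-conjugate non-real roots. -/
theorem five_periodic_condition_roots :
    (∃ S : Finset ℝ, S.card = 4 ∧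
      (∀ x : ℝ, 64 * x ^ 6 - 16 * x ^ 4 - 52 * x ^ 2 + 5 = 0 ↔ x ∈ S) ∧
      ∀ x ∈ S, -1 < x ∧ x < 1) ∧
    (∃ z : ℂ, z.im ≠ 0 ∧
      64 * z ^ 6 - 16 * z ^ 4 - 52 * z ^ 2 + 5 = 0 ∧
      64 * (starRingEnd ℂ z) ^ 6 - 16 * (starRingEnd ℂ z) ^ 4
        - 52 * (starRingEnd ℂ z) ^ 2 + 5 = 0) := by
  obtain ⟨a, b, c, hab, hbc, ha1, ha0, hb0, hb1, hc0, hc1, ha, key⟩ := cubic_roots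
  set sb := Real.sqrt b with hsb'
  set sc := Real.sqrt c with hsc'
  have hsb0 : 0 < sb := Real.sqrt_pos.mpr hb0
  have hsc0 : 0 < sc := Real.sqrt_pos.mpr hc0
  have hsbsc : sb < sc := Real.sqrt_lt_sqrt hb0.le hbc
  have hsb2 : sb ^ 2 = b := Real.sq_sqrt hb0.le
  have hsc2 : sc ^ 2 = c := Real.sq_sqrt hc0.le
  have hsb1 : sb < 1 := by nlinarith [hsb2]
  have hsc1 : sc < 1 := by nlinarith [hsc2]
  constructor
  · refine ⟨{-sc, -sb, sb, sc}, ?_, ?_, ?_⟩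
    · have h1 : -sc ∉ ({-sb, sb, sc} : Finset ℝ) := by
        simp only [Finset.mem_insert, Finset.mem_singleton]
        push_neg
        refine ⟨by intro h; linarith, by intro h; linarith, by intro h; linarith⟩
      have h2 : -sb ∉ ({sb, sc} : Finset ℝ) := by
        simp only [Finset.mem_insert, Finset.mem_singleton]
        push_neg
        refine ⟨by intro h; linarith, by intro h; linarith⟩
      have h3 : sb ∉ ({sc} : Finset ℝ) := by
        simp only [Finset.mem_singleton]
        intro h; linarith
      rw [Finset.card_insert_of_notMem h1, Finset.card_insert_of_notMem h2,
        Finset.card_insert_of_notMem h3, Finset.card_singleton]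
    · intro x
      rw [key x]
      constructor
      · intro h
        rcases mul_eq_zero.mp h with h | h
        · rcases mul_eq_zero.mp h with h | h
          · exfalso
            have : x ^ 2 - a = 0 := by linarith
            nlinarith [sq_nonneg x]
          · have hx2 : x ^ 2 = b := by linarith [sub_eq_zero.mp h]
            have hfac : (x - sb) * (x + sb) = 0 := by
              rw [← hsb2] at hx2; nlinarith [hx2]
            rcases mul_eq_zero.mp hfac with h' | h'
            · have : x = sb := by linarith
              simp [this]
            · have : x = -sb := by linarith
              simp [this]
        · have hx2 : x ^ 2 = c := by linarith [sub_eq_zero.mp h]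
          have hfac : (x - sc) * (x + sc) = 0 := by
            rw [← hsc2] at hx2; nlinarith [hx2]
          rcases mul_eq_zero.mp hfac with h' | h'
          · have : x = sc := by linarith
            simp [this]
          · have : x = -sc := by linarith
            simp [this]
      · intro hx
        simp only [Finset.mem_insert, Finset.mem_singleton] at hx
        rcases hx with rfl | rfl | rfl | rfl
        · rw [show (-sc) ^ 2 = sc ^ 2 by ring, hsc2]; ring
        · rw [show (-sb) ^ 2 = sb ^ 2 by ring, hsb2]; ring
        · rw [hsb2]; ring
        · rw [hsc2]; ring
    · intro x hx
      simp only [Finset.mem_insert, Finset.mem_singleton] at hx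
      rcases hx with rfl | rfl | rfl | rfl <;> constructor <;> linarith
  · refine ⟨(Real.sqrt (-a) : ℂ) * Complex.I, ?_, ?_, ?_⟩
    · simp only [Complex.mul_I_im, Complex.ofReal_re]
      exact ne_of_gt (Real.sqrt_pos.mpr (by linarith))
    · have hr : Real.sqrt (-a) ^ 2 = -a := Real.sq_sqrt (by linarith)
      have hz2 : ((Real.sqrt (-a) : ℂ) * Complex.I) ^ 2 = (a : ℂ) := by
        have hrc : ((Real.sqrt (-a)) : ℂ) ^ 2 = (-a : ℝ) := by exact_mod_cast congrArg Complex.ofReal hr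
        calc ((Real.sqrt (-a) : ℂ) * Complex.I) ^ 2
            = ((Real.sqrt (-a)) : ℂ) ^ 2 * Complex.I ^ 2 := by ring
          _ = (a : ℂ) := by rw [hrc, Complex.I_sq]; push_cast; ring
      have ha' : (64 : ℂ) * (a : ℂ) ^ 3 - 16 * (a : ℂ) ^ 2 - 52 * (a : ℂ) + 5 = 0 := by
        exact_mod_cast congrArg (Complex.ofReal) ha
      set z : ℂ := (Real.sqrt (-a) : ℂ) * Complex.I with hz'
      linear_combination (64 * z ^ 4 + 64 * (a : ℂ) * z ^ 2 + 64 * (a : ℂ) ^ 2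
        - 16 * z ^ 2 - 16 * (a : ℂ) - 52) * hz2 + ha'
    · have hr : Real.sqrt (-a) ^ 2 = -a := Real.sq_sqrt (by linarith)
      have hz2 : ((Real.sqrt (-a) : ℂ) * Complex.I) ^ 2 = (a : ℂ) := by
        have hrc : ((Real.sqrt (-a)) : ℂ) ^ 2 = (-a : ℝ) := by exact_mod_cast congrArg Complex.ofReal hr
        calc ((Real.sqrt (-a) : ℂ) * Complex.I) ^ 2
            = ((Real.sqrt (-a)) : ℂ) ^ 2 * Complex.I ^ 2 := by ring
          _ = (a : ℂ) := by rw [hrc, Complex.I_sq]; push_cast; ring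
      have hw2 : (starRingEnd ℂ ((Real.sqrt (-a) : ℂ) * Complex.I)) ^ 2 = (a : ℂ) := by
        rw [← map_pow, hz2]
        exact Complex.conj_ofReal a
      have ha' : (64 : ℂ) * (a : ℂ) ^ 3 - 16 * (a : ℂ) ^ 2 - 52 * (a : ℂ) + 5 = 0 := by
        exact_mod_cast congrArg (Complex.ofReal) ha
      set w : ℂ := starRingEnd ℂ ((Real.sqrt (-a) : ℂ) * Complex.I) with hw'
      linear_combination (64 * w ^ 4 + 64 * (a : ℂ) * w ^ 2 + 64 * (a : ℂ) ^ 2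
        - 16 * w ^ 2 - 16 * (a : ℂ) - 52) * hw2 + ha'
end
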